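/- Let Θ be a nonempty type, n a natural number, g : Θ → ℝ^n, ε ∈ ℝ^n, and α > 0 a real number. Then, in the extended reals, the infimum over θ ∈ Θ and over u in the nonnegative orthant of the supremum over λ in the nonnegative orthant of (α/2)‖u‖² + ⟨λ, g(θ) − ε − u⟩ equals the infimum over θ ∈ Θ of (α/2)‖(g(θ) − ε)₊‖². (Proposition 2: the Resilient Feasible Learning problem equals ERM with a clamped-and-squared loss.) -/

import Mathlib

open scoped RealInnerProductSpace

noncomputable def posPart {n : ℕ} (v : EuclideanSpace ℝ (Fin n)) : EuclideanSpace ℝ (Fin n) :=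
  WithLp.toLp 2 (fun i => max (v i) 0)

/-!
For fixed `θ` and `u`, the supremum over `λ ≥ 0` of a function affine in `λ` is `(α/2)‖u‖²`
when `g θ - ε ≤ u` and `⊤` otherwise. The infimum over `u` thus minimises `‖u‖²` over
`u ≥ max (g θ - ε) 0`, and coordinatewise monotonicity of the norm puts the minimum at
`u = (g θ - ε)₊`.
-/

section Orthant

variable {ι : Type*} [Fintype ι]

theorem inner_nonpos_of_nonneg_of_nonpos {l w : EuclideanSpace ℝ ι} (hl : ∀ i, 0 ≤ l i)
    (hw : ∀ i, w i ≤ 0) : ⟪l, w⟫ ≤ 0 := by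
  rw [PiLp.inner_apply]
  exact Finset.sum_nonpos fun i _ => by
    simpa [mul_comm] using mul_nonpos_of_nonneg_of_nonpos (hl i) (hw i)

theorem norm_le_norm_of_nonneg_of_le {x y : EuclideanSpace ℝ ι} (hx : ∀ i, 0 ≤ x i)
    (hxy : ∀ i, x i ≤ y i) : ‖x‖ ≤ ‖y‖ := by
  rw [EuclideanSpace.norm_eq, EuclideanSpace.norm_eq]
  gcongr with i
  exact abs_le_abs_of_nonneg (hx i) (hxy i)

theorem iSup_orthant_add_inner_of_nonpos (c : ℝ) {w : EuclideanSpace ℝ ι} (hw : ∀ i, w i ≤ 0) :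
    ⨆ l : {l : EuclideanSpace ℝ ι // ∀ i, 0 ≤ l i}, ((c + ⟪l.1, w⟫ : ℝ) : EReal) = c := by
  refine le_antisymm (iSup_le fun l => ?_) ?_
  · exact EReal.coe_le_coe_iff.mpr (by linarith [inner_nonpos_of_nonneg_of_nonpos l.2 hw])
  · simpa using le_iSup (fun l : {l : EuclideanSpace ℝ ι // ∀ i, 0 ≤ l i} =>
      ((c + ⟪l.1, w⟫ : ℝ) : EReal)) ⟨0, fun _ => le_rfl⟩

theorem iSup_orthant_add_inner_of_pos (c : ℝ) {w : EuclideanSpace ℝ ι} {i : ι} (hi : 0 < w i) :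
    ⨆ l : {l : EuclideanSpace ℝ ι // ∀ i, 0 ≤ l i}, ((c + ⟪l.1, w⟫ : ℝ) : EReal) = ⊤ := by
  classical
  refine (EReal.eq_top_iff_forall_lt _).mpr fun y => ?_
  set t := (|y - c| + 1) / w i
  have ht : 0 ≤ t := by positivity
  have hl : ∀ j, 0 ≤ EuclideanSpace.single i t j := fun j => by
    rw [PiLp.single_apply]; split_ifs <;> simp [ht]
  refine lt_of_lt_of_le ?_ (le_iSup _ ⟨EuclideanSpace.single i t, hl⟩)
  have hval : t * w i = |y - c| + 1 := div_mul_cancel₀ _ hi.ne'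
  rw [EReal.coe_lt_coe_iff, EuclideanSpace.inner_single_left]
  simp only [conj_trivial]
  linarith [le_abs_self (y - c)]

end Orthant

theorem posPart_apply_nonneg {n : ℕ} (v : EuclideanSpace ℝ (Fin n)) (i : Fin n) :
    0 ≤ posPart v i :=
  le_max_right _ _

theorem le_posPart_apply {n : ℕ} (v : EuclideanSpace ℝ (Fin n)) (i : Fin n) :
    v i ≤ posPart v i :=
  le_max_left _ _

theorem posPart_apply_le {n : ℕ} {v u : EuclideanSpace ℝ (Fin n)} (hu : ∀ i, 0 ≤ u i)
    (hvu : ∀ i, v i ≤ u i) (i : Fin n) : posPart v i ≤ u i :=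
  max_le (hvu i) (hu i)

theorem iInf_orthant_iSup_orthant_penalty {n : ℕ} (v : EuclideanSpace ℝ (Fin n)) {a : ℝ}
    (ha : 0 ≤ a) :
    ⨅ u : {u : EuclideanSpace ℝ (Fin n) // ∀ i, 0 ≤ u i},
      ⨆ l : {l : EuclideanSpace ℝ (Fin n) // ∀ i, 0 ≤ l i},
        ((a * ‖u.1‖ ^ 2 + ⟪l.1, v - u.1⟫ : ℝ) : EReal) = ((a * ‖posPart v‖ ^ 2 : ℝ) : EReal) := by
  have hsup : ∀ u : EuclideanSpace ℝ (Fin n), (∀ i, v i ≤ u i) →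
      ⨆ l : {l : EuclideanSpace ℝ (Fin n) // ∀ i, 0 ≤ l i},
        ((a * ‖u‖ ^ 2 + ⟪l.1, v - u⟫ : ℝ) : EReal) = ((a * ‖u‖ ^ 2 : ℝ) : EReal) :=
    fun u hvu => iSup_orthant_add_inner_of_nonpos _ fun i => by simpa using hvu i
  refine le_antisymm ?_ (le_iInf fun u => ?_)
  · refine (iInf_le _ ⟨posPart v, posPart_apply_nonneg v⟩).trans ?_
    rw [hsup _ (le_posPart_apply v)]
  by_cases hvu : ∀ i, v i ≤ u.1 i
  · rw [hsup _ hvu, EReal.coe_le_coe_iff]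
    have := norm_le_norm_of_nonneg_of_le (posPart_apply_nonneg v) (posPart_apply_le u.2 hvu)
    gcongr
  · obtain ⟨i, hi⟩ := not_forall.mp hvu
    rw [iSup_orthant_add_inner_of_pos _ (i := i) (by simpa using not_le.mp hi)]
    exact le_top

theorem rfl_equals_clamped_squared_erm_general (Θ : Type*) (n : ℕ)
    (g : Θ → EuclideanSpace ℝ (Fin n)) (ε : EuclideanSpace ℝ (Fin n))
    (α : ℝ) (hα : 0 < α) :
    (⨅ θ : Θ, ⨅ u : {u : EuclideanSpace ℝ (Fin n) // ∀ i, 0 ≤ u i},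
      ⨆ l : {l : EuclideanSpace ℝ (Fin n) // ∀ i, 0 ≤ l i},
        ((α / 2 * ‖u.1‖ ^ 2 + ⟪l.1, g θ - ε - u.1⟫ : ℝ) : EReal)) =
    ⨅ θ : Θ, ((α / 2 * ‖posPart (g θ - ε)‖ ^ 2 : ℝ) : EReal) :=
  iInf_congr fun θ => iInf_orthant_iSup_orthant_penalty (g θ - ε) (by positivity)

/-- Proposition 2: the Resilient Feasible Learning problem equals ERM with a
clamped-and-squared loss. In the extended reals, the infimum over `θ` and over `u` in the
nonnegative orthant of the supremum over `λ` in the nonnegative orthant of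
`(α/2)‖u‖² + ⟪λ, g(θ) − ε − u⟫` equals the infimum over `θ` of `(α/2)‖(g(θ) − ε)₊‖²`. -/
theorem rfl_equals_clamped_squared_erm (Θ : Type*) [Nonempty Θ] (n : ℕ)
    (g : Θ → EuclideanSpace ℝ (Fin n)) (ε : EuclideanSpace ℝ (Fin n))
    (α : ℝ) (hα : 0 < α) :
    (⨅ θ : Θ, ⨅ u : {u : EuclideanSpace ℝ (Fin n) // ∀ i, 0 ≤ u i},
      ⨆ l : {l : EuclideanSpace ℝ (Fin n) // ∀ i, 0 ≤ l i},
        ((α / 2 * ‖u.1‖ ^ 2 + ⟪l.1, g θ - ε - u.1⟫ : ℝ) : EReal)) =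
    ⨅ θ : Θ, ((α / 2 * ‖posPart (g θ - ε)‖ ^ 2 : ℝ) : EReal) :=
  rfl_equals_clamped_squared_erm_general Θ n g ε α hα
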